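/- Let p be a pmf on X×Y (X, Y finite) with strictly positive marginals, and let M = |X|·|Y| + 1. Then ε₁(p) ≤ ε₃, where ε₃ is the maximum of Σ_{t=1}^{M} min{ δ(x,y,t) : (x,y) with p(x,y) > 0 } over all functions δ : X×Y×{1,…,M} → [0,∞) such that Σ_{t=1}^{M} δ(x,y,t) = 1 for every (x,y) and, for every t, the |X|×|Y| matrix with entries p(x,y)·δ(x,y,t) has rank at most one. -/

import Mathlib

/-- A probability mass function on a finite set `S`. -/
def IsPMF {S : Type*} [Fintype S] (p : S → ℝ) : Prop :=
  (∀ s, 0 ≤ p s) ∧ ∑ s, p s = 1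

/-- The value assigned to a path `(x₁,y₁,…,x_k,y_k)` (indexed here by `Fin (m+1)`,
so `k = m+1 ≥ 1`).  Subtraction in `Fin (m+1)` is cyclic, so the denominator is
`p(x₁,y_k) · ∏_{i=2}^k p(x_i,y_{i-1})`. -/
noncomputable def pathValue {X Y : Type*} [Fintype X] [Fintype Y] (p : X × Y → ℝ)
    {m : ℕ} (x : Fin (m + 1) → X) (y : Fin (m + 1) → Y) : ℝ :=
  ((∏ i, p (x i, y i)) / ∏ i, p (x i, y (i - 1))) ^ (1 / (m + 1 : ℝ))

/-- A path is admissible if the `x_i` are pairwise distinct, the `y_i` are pairwise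
distinct, `p(x₁,y_k) > 0`, and `p(x_i,y_{i-1}) > 0` for `2 ≤ i ≤ k`. -/
def IsAdmissiblePath {X Y : Type*} [Fintype X] [Fintype Y] (p : X × Y → ℝ)
    {m : ℕ} (x : Fin (m + 1) → X) (y : Fin (m + 1) → Y) : Prop :=
  Function.Injective x ∧ Function.Injective y ∧ ∀ i, 0 < p (x i, y (i - 1))

/-- `ε₁(p)`: the minimum value over all admissible paths. -/
noncomputable def eps1 {X Y : Type*} [Fintype X] [Fintype Y] (p : X × Y → ℝ) : ℝ :=
  sInf { v : ℝ | ∃ (m : ℕ) (x : Fin (m + 1) → X) (y : Fin (m + 1) → Y),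
    IsAdmissiblePath p x y ∧ v = pathValue p x y }

/-- `ε₃(p, M)`: the supremum of `Σ_{t=1}^{M} min{δ(x,y,t) : p(x,y) > 0}` over all
`δ : X×Y×{1,…,M} → [0,∞)` with `Σ_t δ(x,y,t) = 1` for every `(x,y)` and such that,
for every `t`, the matrix `[p(x,y)·δ(x,y,t)]` has rank at most one. -/
noncomputable def eps3 {X Y : Type*} [Fintype X] [Fintype Y]
    (p : X → Y → ℝ) (M : ℕ) : ℝ :=
  sSup { r : ℝ | ∃ δ : X → Y → Fin M → ℝ,
    (∀ x y t, 0 ≤ δ x y t) ∧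
    (∀ x y, ∑ t, δ x y t = 1) ∧
    (∀ t, (Matrix.of fun x y => p x y * δ x y t).rank ≤ 1) ∧
    r = ∑ t, ⨅ xy : {xy : X × Y // 0 < p xy.1 xy.2}, δ xy.1.1 xy.1.2 t }

/-!
If `p` has a zero entry `p(x₀, y₀)`, the positive marginals give `p(x₀, y₁) > 0` and
`p(x₁, y₀) > 0`, and the path `(x₀, y₀, x₁, y₁)` has value `0`, so `ε₁(p) ≤ 0 ≤ ε₃`.

Otherwise let `ε = ε₁(p) > 0`, `w = log p` and `L = -log ε`. On the complete bipartite digraph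
on `X ⊕ Y`, give `x → y` the weight `w(x, y)` and `y → x` the weight `L - w(x, y)`. The simple
cycles `y_k → x₁ → y₁ → ⋯ → x_k → y_k` are the admissible paths `(x₁, y₁, …, x_k, y_k)`, and
after taking logarithms, `ε` being at most the value of the path says that the cycle has
nonnegative weight. Shortest-path distances are then
potentials `u, v` with `w - L ≤ v(y) - u(x) ≤ w`, i.e. `ε p(x, y) ≤ e^{v(y) - u(x)} ≤ p(x, y)`.
The rank-one matrix `e^{v(y) - u(x)}` is `p · δ₀` with `ε ≤ δ₀ ≤ 1`, and `δ₀` is completed to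
a feasible `δ` for `ε₃` by giving each `(x, y)` a private slot with the single entry
`1 - δ₀(x, y)`.
-/

open List Real

namespace List

variable {V : Type*} (W : V → V → ℝ)

def walkWeight : List V → ℝ
  | a :: b :: l => W a b + walkWeight (b :: l)
  | _ => 0

@[simp] lemma walkWeight_nil : walkWeight W [] = 0 := rfl

@[simp] lemma walkWeight_singleton (a : V) : walkWeight W [a] = 0 := rfl

@[simp] lemma walkWeight_cons_cons (a b : V) (l : List V) :
    walkWeight W (a :: b :: l) = W a b + walkWeight W (b :: l) := rfl

lemma walkWeight_append_cons (l₁ : List V) (a : V) (l₂ : List V) :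
    walkWeight W (l₁ ++ a :: l₂) = walkWeight W (l₁ ++ [a]) + walkWeight W (a :: l₂) := by
  induction l₁ with
  | nil => simp
  | cons b l₁ ih =>
    cases l₁ with
    | nil => simp
    | cons c l₁ => simp only [cons_append, walkWeight_cons_cons] at ih ⊢; rw [ih]; ring

lemma walkWeight_rotate (a b : V) (l : List V) :
    walkWeight W (a :: l ++ [b, a]) = walkWeight W (b :: a :: l ++ [b]) := by
  rw [walkWeight_append_cons]
  simp only [cons_append, walkWeight_cons_cons, walkWeight_singleton]
  ring

end List

lemma exists_min_walkWeight_path {V : Type*} [Finite V] (W : V → V → ℝ) (R : V → V → Prop)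
    (b : V) :
    ∃ l, ((l ++ [b]).Nodup ∧ (l ++ [b]).IsChain R) ∧ ∀ l', (l' ++ [b]).Nodup →
      (l' ++ [b]).IsChain R → walkWeight W (l ++ [b]) ≤ walkWeight W (l' ++ [b]) := by
  have := Fintype.ofFinite V
  have hfin : {l : List V | (l ++ [b]).Nodup ∧ (l ++ [b]).IsChain R}.Finite := by
    refine ((Set.finite_univ (α := {l : List V // l.Nodup})).image Subtype.val).subset ?_
    intro l hl
    exact ⟨⟨l, hl.1.sublist (sublist_append_left _ _)⟩, trivial, rfl⟩
  obtain ⟨l, hl, hmin⟩ := Set.exists_min_image _ (fun l => walkWeight W (l ++ [b])) hfin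
    ⟨[], by simp⟩
  exact ⟨l, hl, fun l' h₁ h₂ => hmin l' ⟨h₁, h₂⟩⟩

theorem exists_potential_of_cycle_nonneg {V : Type*} [Finite V] (W : V → V → ℝ)
    (R : V → V → Prop)
    (hcyc : ∀ a l, (a :: l).Nodup → (a :: l ++ [a]).IsChain R →
      0 ≤ walkWeight W (a :: l ++ [a])) :
    ∃ d : V → ℝ, ∀ a b, R a b → d b ≤ d a + W a b := by
  -- `d b` is the least weight of a simple path ending at `b`. Extending an optimal path to `a`
  -- by the edge `a → b` either gives a simple path to `b`, or it passes through `b` and ends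
  -- with a simple cycle at `b`, whose removal does not increase the weight.
  choose P hP hPmin using exists_min_walkWeight_path W R
  refine ⟨fun b => walkWeight W (P b ++ [b]), fun a b hab => ?_⟩
  have hext : walkWeight W (P a ++ [a] ++ [b]) = walkWeight W (P a ++ [a]) + W a b := by
    rw [append_assoc, singleton_append, walkWeight_append_cons]; simp
  obtain ⟨hnd, hch⟩ := hP a
  have hch' : (P a ++ [a] ++ [b]).IsChain R :=
    hch.append (isChain_singleton b) (by simp [hab])
  dsimp only
  rw [← hext]
  by_cases hb : b ∈ P a ++ [a]
  · obtain ⟨l₁, l₂, hsplit⟩ := append_of_mem hb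
    rw [hsplit] at hnd hch' ⊢
    have hcycle := hcyc b l₂ (hnd.sublist (sublist_append_right _ _))
      (hch'.suffix (by simp))
    calc walkWeight W (P b ++ [b]) ≤ walkWeight W (l₁ ++ [b]) :=
          hPmin b l₁ (hnd.sublist (by simp)) (hch'.infix ⟨[], l₂ ++ [b], by simp⟩)
      _ ≤ walkWeight W (l₁ ++ [b]) + walkWeight W (b :: l₂ ++ [b]) :=
        le_add_of_nonneg_right hcycle
      _ = walkWeight W (l₁ ++ b :: l₂ ++ [b]) := by
        rw [append_assoc, cons_append, walkWeight_append_cons W l₁ b (l₂ ++ [b])]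
  · exact hPmin b (P a ++ [a]) (nodup_append_comm.1 (nodup_cons.2 ⟨hb, hnd⟩)) hch'

lemma Fin.cons_last_apply_castSucc {α : Type*} {m : ℕ} (g : Fin (m + 1) → α) (i : Fin (m + 1)) :
    (Fin.cons (g (Fin.last m)) g : Fin (m + 2) → α) i.castSucc = g (i - 1) := by
  induction i using Fin.cases with
  | zero =>
    simp only [Fin.castSucc_zero, Fin.cons_zero]
    congr 1
    rw [Fin.ext_iff, Fin.coe_sub_one]
    simp
  | succ j =>
    rw [← Fin.succ_castSucc, Fin.cons_succ]
    congr 1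
    rw [Fin.ext_iff, Fin.coe_sub_one]
    simp

namespace Bipartite

open Sum

variable {X Y : Type*}

def Adj (a b : X ⊕ Y) : Prop := a.isLeft ≠ b.isLeft

def weight (w : X → Y → ℝ) (L : ℝ) : X ⊕ Y → X ⊕ Y → ℝ
  | inl x, inr y => w x y
  | inr y, inl x => L - w x y
  | _, _ => 0

def interleave (ps : List (X × Y)) : List (X ⊕ Y) := ps.flatMap fun q => [inl q.1, inr q.2]

@[simp] lemma interleave_nil : interleave ([] : List (X × Y)) = [] := rfl

@[simp] lemma interleave_cons (q : X × Y) (ps : List (X × Y)) :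
    interleave (q :: ps) = inl q.1 :: inr q.2 :: interleave ps := rfl

lemma interleave_append (ps qs : List (X × Y)) :
    interleave (ps ++ qs) = interleave ps ++ interleave qs := flatMap_append

lemma filterMap_getLeft_interleave (ps : List (X × Y)) :
    (interleave ps).filterMap getLeft? = ps.map Prod.fst := by
  induction ps with
  | nil => rfl
  | cons q ps ih => simp [filterMap_cons, ih]

lemma filterMap_getRight_interleave (ps : List (X × Y)) :
    (interleave ps).filterMap getRight? = ps.map Prod.snd := by
  induction ps with
  | nil => rfl
  | cons q ps ih => simp [filterMap_cons, ih]

lemma nodup_of_nodup_interleave {ps : List (X × Y)} (h : (interleave ps).Nodup) :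
    (ps.map Prod.fst).Nodup ∧ (ps.map Prod.snd).Nodup := by
  rw [← filterMap_getLeft_interleave, ← filterMap_getRight_interleave]
  exact ⟨h.filterMap (by aesop), h.filterMap (by aesop)⟩

lemma exists_interleave_of_isChain (z y : Y) :
    ∀ l : List (X ⊕ Y), (inr z :: l ++ [inr y]).IsChain Adj →
      ∃ ps x, l = interleave ps ++ [inl x]
  | [] => by simp [Adj]
  | [inl x] => fun _ => ⟨[], x, rfl⟩
  | [inr _] => by simp [Adj]
  | inl x :: inr y' :: l => fun h => by
    obtain ⟨ps, x', rfl⟩ := exists_interleave_of_isChain y' y l (by simp_all)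
    exact ⟨(x, y') :: ps, x', rfl⟩
  | inl _ :: inl _ :: _ => by simp [Adj]
  | inr _ :: _ :: _ => by simp [Adj]

lemma walkWeight_inr_cons_interleave_ofFn (w : X → Y → ℝ) (L : ℝ) :
    ∀ {n : ℕ} (f : Fin n → X × Y) (z : Y),
      walkWeight (weight w L) (inr z :: interleave (ofFn f)) =
        ∑ i, (L + w (f i).1 (f i).2 -
          w (f i).1 ((Fin.cons z fun j => (f j).2 : Fin (n + 1) → Y) i.castSucc))
  | 0, _, _ => by simp
  | n + 1, f, z => by
    rw [ofFn_succ, interleave_cons, walkWeight_cons_cons, walkWeight_cons_cons,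
      walkWeight_inr_cons_interleave_ofFn w L (fun i => f i.succ), Fin.sum_univ_succ]
    have hcons : (Fin.cons (f 0).2 fun j : Fin n => (f j.succ).2 : Fin (n + 1) → Y) =
        fun j => (f j).2 := Fin.cons_self_tail (fun j => (f j).2)
    simp only [hcons, Fin.castSucc_zero, Fin.cons_zero, ← Fin.succ_castSucc, Fin.cons_succ, weight]
    ring

lemma walkWeight_cycle_nonneg_of_inr (w : X → Y → ℝ) (L : ℝ)
    (hcyc : ∀ (m : ℕ) (x : Fin (m + 1) → X) (y : Fin (m + 1) → Y),
      x.Injective → y.Injective → 0 ≤ ∑ i, (L + w (x i) (y i) - w (x i) (y (i - 1))))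
    (y : Y) (l : List (X ⊕ Y)) (hnd : (inr y :: l).Nodup)
    (hch : (inr y :: l ++ [inr y]).IsChain Adj) :
    0 ≤ walkWeight (weight w L) (inr y :: l ++ [inr y]) := by
  obtain ⟨ps, x, rfl⟩ := exists_interleave_of_isChain y y l hch
  let f : Fin (ps.length + 1) → X × Y := Fin.snoc (fun i => ps[(i : ℕ)]) (x, y)
  have hf : ofFn f = ps ++ [(x, y)] := by
    rw [ofFn_succ', concat_eq_append]
    simp only [f, Fin.snoc_castSucc, Fin.snoc_last, ofFn_getElem]
  have hcycle : interleave ps ++ [inl x] ++ [inr y] = interleave (ofFn f) := by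
    rw [hf, interleave_append, append_assoc]; rfl
  have hlast : (f (Fin.last _)).2 = y := by simp [f]
  have hnd' := nodup_append_comm.1 (show ([inr y] ++ (interleave ps ++ [inl x])).Nodup from hnd)
  rw [hcycle] at hnd'
  obtain ⟨hx, hy⟩ := nodup_of_nodup_interleave hnd'
  rw [map_ofFn, nodup_ofFn] at hx hy
  rw [cons_append, hcycle, walkWeight_inr_cons_interleave_ofFn, ← hlast]
  simpa only [Fin.cons_last_apply_castSucc (fun j => (f j).2)] using
    hcyc _ (fun i => (f i).1) (fun i => (f i).2) hx hy

theorem exists_potential [Finite X] [Finite Y] (w : X → Y → ℝ) (L : ℝ)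
    (hcyc : ∀ (m : ℕ) (x : Fin (m + 1) → X) (y : Fin (m + 1) → Y),
      x.Injective → y.Injective → 0 ≤ ∑ i, (L + w (x i) (y i) - w (x i) (y (i - 1)))) :
    ∃ (u : X → ℝ) (v : Y → ℝ), ∀ x y, v y ≤ u x + w x y ∧ u x ≤ v y + (L - w x y) := by
  obtain ⟨d, hd⟩ : ∃ d : X ⊕ Y → ℝ, ∀ a b, Adj a b → d b ≤ d a + weight w L a b := by
    refine exists_potential_of_cycle_nonneg (weight w L) Adj ?_
    rintro (x | y) l hnd hch
    · obtain rfl | ⟨l, b, rfl⟩ := eq_nil_or_concat l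
      · simp [Adj] at hch
      obtain ⟨y, rfl⟩ : ∃ y, b = inr y := by
        cases b with
        | inl _ => simp [Adj] at hch
        | inr y => exact ⟨y, rfl⟩
      rw [concat_eq_append] at hnd hch
      rw [concat_eq_append, cons_append, append_assoc, singleton_append, ← cons_append,
        walkWeight_rotate]
      refine walkWeight_cycle_nonneg_of_inr w L hcyc y (inl x :: l)
        ((nodup_append_comm (l₁ := inl x :: l) (l₂ := [inr y])).1 hnd) ?_
      exact .cons_cons (by simp [Adj]) hch.left_of_append
    · exact walkWeight_cycle_nonneg_of_inr w L hcyc y l hnd hch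
  exact ⟨fun x => d (inl x), fun y => d (inr y), fun x y =>
    ⟨hd (inl x) (inr y) (by simp [Adj]), hd (inr y) (inl x) (by simp [Adj])⟩⟩

end Bipartite


section Eps1

variable {X Y : Type*} [Fintype X] [Fintype Y] {p : X × Y → ℝ}

lemma pathValue_nonneg (hp : ∀ s, 0 ≤ p s) {m : ℕ} (x : Fin (m + 1) → X) (y : Fin (m + 1) → Y) :
    0 ≤ pathValue p x y :=
  rpow_nonneg (div_nonneg (Finset.prod_nonneg fun _ _ => hp _)
    (Finset.prod_nonneg fun _ _ => hp _)) _

lemma eps1_le_pathValue (hp : ∀ s, 0 ≤ p s) {m : ℕ} {x : Fin (m + 1) → X}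
    {y : Fin (m + 1) → Y} (h : IsAdmissiblePath p x y) : eps1 p ≤ pathValue p x y :=
  csInf_le ⟨0, by rintro _ ⟨m, x, y, -, rfl⟩; exact pathValue_nonneg hp x y⟩ ⟨m, x, y, h, rfl⟩

lemma eps1_nonpos_of_eq_zero (hp : ∀ s, 0 ≤ p s) {x₀ x₁ : X} {y₀ y₁ : Y}
    (h₀ : p (x₀, y₀) = 0) (hx : 0 < p (x₀, y₁)) (hy : 0 < p (x₁, y₀)) : eps1 p ≤ 0 := by
  have hx₀₁ : x₀ ≠ x₁ := by rintro rfl; exact hy.ne' h₀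
  have hy₀₁ : y₀ ≠ y₁ := by rintro rfl; exact hx.ne' h₀
  have hadm : IsAdmissiblePath p ![x₀, x₁] ![y₀, y₁] := by
    refine ⟨?_, ?_, ?_⟩
    · intro i j; fin_cases i <;> fin_cases j <;> simp [hx₀₁, hx₀₁.symm]
    · intro i j; fin_cases i <;> fin_cases j <;> simp [hy₀₁, hy₀₁.symm]
    · intro i; fin_cases i <;> simpa
  have hval : pathValue p ![x₀, x₁] ![y₀, y₁] = 0 := by
    simp [pathValue, Fin.prod_univ_two, h₀]
  exact hval ▸ eps1_le_pathValue hp hadm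

lemma sum_log_sub_nonneg_of_le_pathValue (hp : ∀ s, 0 < p s) {ε : ℝ} (hε : 0 < ε) {m : ℕ}
    {x : Fin (m + 1) → X} {y : Fin (m + 1) → Y} (h : ε ≤ pathValue p x y) :
    0 ≤ ∑ i, (-log ε + log (p (x i, y i)) - log (p (x i, y (i - 1)))) := by
  have hnum : 0 < ∏ i, p (x i, y i) := Finset.prod_pos fun _ _ => hp _
  have hden : 0 < ∏ i, p (x i, y (i - 1)) := Finset.prod_pos fun _ _ => hp _
  have hk : (0 : ℝ) < m + 1 := by positivity
  rw [pathValue, one_div, le_rpow_inv_iff_of_pos hε.le (by positivity) hk] at h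
  have hlog := log_le_log (by positivity) h
  rw [log_rpow hε, log_div hnum.ne' hden.ne', log_prod (fun _ _ => (hp _).ne'),
    log_prod (fun _ _ => (hp _).ne')] at hlog
  simp only [Finset.sum_sub_distrib, Finset.sum_add_distrib, Finset.sum_const, Finset.card_univ,
    Fintype.card_fin, nsmul_eq_mul]
  push_cast
  linarith

lemma pos_of_zero_lt_eps1 (hp : ∀ s, 0 ≤ p s) (hX : ∀ x, 0 < ∑ y, p (x, y))
    (hY : ∀ y, 0 < ∑ x, p (x, y)) (hε : 0 < eps1 p) (s : X × Y) : 0 < p s := by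
  refine (hp s).lt_of_ne' fun h₀ => hε.not_ge ?_
  obtain ⟨y₁, -, hy₁⟩ := (Finset.sum_pos_iff_of_nonneg fun y _ => hp _).1 (hX s.1)
  obtain ⟨x₁, -, hx₁⟩ := (Finset.sum_pos_iff_of_nonneg fun x _ => hp _).1 (hY s.2)
  exact eps1_nonpos_of_eq_zero hp h₀ hy₁ hx₁

end Eps1

lemma Matrix.rank_le_one_of_eq_zero_of_ne {m n R : Type*} [Fintype n] [CommRing R]
    [StrongRankCondition R] {A : Matrix m n R} (i₀ : m) (j₀ : n)
    (h : ∀ i j, (i, j) ≠ (i₀, j₀) → A i j = 0) : A.rank ≤ 1 := by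
  classical
  have : A = Matrix.vecMulVec (Pi.single i₀ (A i₀ j₀)) (Pi.single j₀ 1) := by
    ext i j
    by_cases hij : (i, j) = (i₀, j₀)
    · simp_all [Matrix.vecMulVec_apply]
    · rw [h i j hij]
      simp only [Prod.mk.injEq, not_and_or] at hij
      rcases hij with h | h <;> simp [Matrix.vecMulVec_apply, h]
  exact this ▸ Matrix.rank_vecMulVec_le _ _

section Eps3

variable {X Y : Type*} [Fintype X] [Fintype Y]

lemma le_eps3 (p : X → Y → ℝ) (hp : ∃ x y, 0 < p x y)
    (δ₀ : X → Y → ℝ) (hδ₀ : ∀ x y, 0 ≤ δ₀ x y ∧ δ₀ x y ≤ 1)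
    (hrank : (Matrix.of fun x y => p x y * δ₀ x y).rank ≤ 1) {c : ℝ}
    (hc : ∀ x y, 0 < p x y → c ≤ δ₀ x y) :
    c ≤ eps3 p (Fintype.card X * Fintype.card Y + 1) := by
  classical
  obtain ⟨x₀, y₀, hp₀⟩ := hp
  have : Nonempty {xy : X × Y // 0 < p xy.1 xy.2} := ⟨⟨(x₀, y₀), hp₀⟩⟩
  let e := Fintype.equivFinOfCardEq (Fintype.card_prod X Y)
  let δ : X → Y → Fin (Fintype.card X * Fintype.card Y + 1) → ℝ := fun x y =>
    Fin.cons (δ₀ x y) (Pi.single (e (x, y)) (1 - δ₀ x y))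
  have hδ_nonneg : ∀ x y t, 0 ≤ δ x y t := by
    intro x y t
    induction t using Fin.cases with
    | zero => exact (hδ₀ x y).1
    | succ t =>
      simp only [δ, Fin.cons_succ, Pi.single_apply]
      split_ifs <;> linarith [(hδ₀ x y).2]
  have hδ_sum : ∀ x y, ∑ t, δ x y t = 1 := by
    intro x y
    simp [δ, Fin.sum_univ_succ, Finset.sum_pi_single']
  have hδ_rank : ∀ t, (Matrix.of fun x y => p x y * δ x y t).rank ≤ 1 := by
    intro t
    induction t using Fin.cases with
    | zero => simpa [δ] using hrank
    | succ t =>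
      refine Matrix.rank_le_one_of_eq_zero_of_ne (e.symm t).1 (e.symm t).2 fun x y hxy => ?_
      have : t ≠ e (x, y) := fun h => hxy (by rw [h, Equiv.symm_apply_apply])
      simp [δ, Pi.single_apply, this]
  rw [eps3]
  refine le_csSup_of_le ⟨1, ?_⟩ ⟨δ, hδ_nonneg, hδ_sum, hδ_rank, rfl⟩ ?_
  · rintro _ ⟨δ, hδ_nonneg, hδ_sum, -, rfl⟩
    calc _ ≤ ∑ t, δ x₀ y₀ t := Finset.sum_le_sum fun t _ =>
          ciInf_le (Finite.bddBelow_range _) (⟨(x₀, y₀), hp₀⟩ : {xy : X × Y // 0 < p xy.1 xy.2})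
      _ = 1 := hδ_sum x₀ y₀
  · calc c ≤ ⨅ xy : {xy : X × Y // 0 < p xy.1 xy.2}, δ xy.1.1 xy.1.2 0 :=
          le_ciInf fun xy => hc _ _ xy.2
      _ ≤ _ := by
        rw [Fin.sum_univ_succ]
        exact le_add_of_nonneg_right
          (Finset.sum_nonneg fun t _ => Real.iInf_nonneg fun xy => hδ_nonneg _ _ _)

lemma eps3_nonneg (p : X → Y → ℝ) (hp : ∃ x y, 0 < p x y) :
    0 ≤ eps3 p (Fintype.card X * Fintype.card Y + 1) :=
  le_eps3 p hp 0 (fun _ _ => by simp)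
    (by simp only [Pi.zero_apply, mul_zero]; exact Matrix.rank_zero.trans_le zero_le_one)
    (fun _ _ _ => le_rfl)

lemma le_eps3_of_le_mul_le [Nonempty X] [Nonempty Y] (p : X → Y → ℝ) (hp : ∀ x y, 0 < p x y)
    (a : X → ℝ) (b : Y → ℝ) {c : ℝ} (hc : 0 ≤ c)
    (h : ∀ x y, c * p x y ≤ a x * b y ∧ a x * b y ≤ p x y) :
    c ≤ eps3 p (Fintype.card X * Fintype.card Y + 1) := by
  refine le_eps3 p ⟨Classical.arbitrary X, Classical.arbitrary Y, hp _ _⟩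
    (fun x y => a x * b y / p x y)
    (fun x y => ⟨div_nonneg ((mul_nonneg hc (hp x y).le).trans (h x y).1) (hp x y).le,
      (div_le_one (hp x y)).2 (h x y).2⟩) ?_
    (fun x y _ => (le_div_iff₀ (hp x y)).2 (h x y).1)
  have : (Matrix.of fun x y => p x y * (a x * b y / p x y)) = Matrix.vecMulVec a b := by
    ext x y
    simp [Matrix.vecMulVec_apply, mul_div_cancel₀ _ (hp x y).ne']
  exact this ▸ Matrix.rank_vecMulVec_le a b

end Eps3

/-- for a pmf `p` on `X × Y` with strictly positive marginals and
`M = |X|·|Y| + 1`, we have `ε₁(p) ≤ ε₃`. -/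
theorem eps1_le_eps3 {X Y : Type*} [Fintype X] [Fintype Y]
    (p : X × Y → ℝ) (hp : IsPMF p)
    (hX : ∀ x, 0 < ∑ y, p (x, y)) (hY : ∀ y, 0 < ∑ x, p (x, y)) :
    eps1 p ≤ eps3 (fun x y => p (x, y)) (Fintype.card X * Fintype.card Y + 1) := by
  obtain ⟨hp0, hp1⟩ := hp
  obtain ⟨⟨x₀, y₀⟩, -, hs⟩ := (Finset.sum_pos_iff_of_nonneg fun s _ => hp0 s).1 (hp1 ▸ one_pos)
  have h3 := eps3_nonneg (fun x y => p (x, y)) ⟨x₀, y₀, hs⟩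
  rcases le_or_gt (eps1 p) 0 with hε | hε
  · exact hε.trans h3
  have hpos := pos_of_zero_lt_eps1 hp0 hX hY hε
  have : Nonempty X := ⟨x₀⟩
  have : Nonempty Y := ⟨y₀⟩
  obtain ⟨u, v, huv⟩ := Bipartite.exists_potential (fun x y => log (p (x, y))) (-log (eps1 p))
    fun m x y hx hy => sum_log_sub_nonneg_of_le_pathValue hpos hε
      (eps1_le_pathValue hp0 ⟨hx, hy, fun _ => hpos _⟩)
  refine le_eps3_of_le_mul_le _ (fun x y => hpos _) (fun x => exp (-u x)) (fun y => exp (v y))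
    hε.le fun x y => ?_
  rw [← exp_log hε, ← exp_log (hpos (x, y)), ← exp_add, ← exp_add, exp_le_exp, exp_le_exp]
  constructor <;> linarith [huv x y]
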